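/- arXiv:2308.10748 — 2 statements merged into one kernel-verified Lean document; each statement's English description precedes it below -/
import Mathlib

section
/- Let V be a real vector space, V₀ ⊆ V a subspace, a : V × V → ℝ a symmetric bilinear form, and ⟪·,·⟫ : V × V → ℝ a symmetric positive-semidefinite bilinear form. For μ in a parameter space M, suppose there exist ω(μ), ψ(μ) ∈ V such that: (i) a(ω(μ), v) = 0 for all v ∈ V₀; (ii) ψ(μ) ∈ V₀ and a(ψ(μ), v) = ⟪ω(μ), v⟫ for all v ∈ V₀; (iii) there is a linear lift H : M → V with ω(μ) − H μ ∈ V₀ for all μ. Define ℓ(μ, η) := −a(ψ(μ), H η) + ⟪ω(μ), H η⟫. Then ℓ(μ, η) = ⟪ω(μ), ω(η)⟫ for all μ, η ∈ M. -/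
/-- Lemma 5.2 of the paper, reformulation of `ℓ_h`: with `V₀` the
homogeneous-boundary-data subspace, `a` symmetric bilinear, `⟪·,·⟫ = ip`
symmetric positive semidefinite, `ω(μ)` `a`-harmonic against `V₀`, `ψ(μ) ∈ V₀`
solving `a(ψ(μ), v) = ⟪ω(μ), v⟫` on `V₀`, and a linear lift `H` with
`ω(μ) − H μ ∈ V₀`, one has
`ℓ(μ, η) := −a(ψ(μ), H η) + ⟪ω(μ), H η⟫ = ⟪ω(μ), ω(η)⟫`. -/
theorem stmt_5 {V M : Type*} [AddCommGroup V] [Module ℝ V]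
    [AddCommGroup M] [Module ℝ M]
    (V₀ : Submodule ℝ V)
    (a : V →ₗ[ℝ] V →ₗ[ℝ] ℝ) (ha : ∀ x y, a x y = a y x)
    (ip : V →ₗ[ℝ] V →ₗ[ℝ] ℝ) (hip_sym : ∀ x y, ip x y = ip y x)
    (hip_psd : ∀ x, 0 ≤ ip x x)
    (ω ψ : M → V) (H : M →ₗ[ℝ] V)
    (hω : ∀ μ, ∀ v ∈ V₀, a (ω μ) v = 0)
    (hψ₀ : ∀ μ, ψ μ ∈ V₀)
    (hψ : ∀ μ, ∀ v ∈ V₀, a (ψ μ) v = ip (ω μ) v)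
    (hH : ∀ μ, ω μ - H μ ∈ V₀) :
    ∀ μ η, -a (ψ μ) (H η) + ip (ω μ) (H η) = ip (ω μ) (ω η) := by
  intro μ η
  have hw : ω η - H η ∈ V₀ := hH η
  have h1 : a (ψ μ) (ω η - H η) = ip (ω μ) (ω η - H η) := hψ μ _ hw
  have h2 : a (ψ μ) (ω η) = 0 := by rw [ha]; exact hω η _ (hψ₀ μ)
  have h3 : a (ψ μ) (ω η - H η) = a (ψ μ) (ω η) - a (ψ μ) (H η) := by
    simp [map_sub]
  have h4 : ip (ω μ) (ω η - H η) = ip (ω μ) (ω η) - ip (ω μ) (H η) := by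
    simp [map_sub]
  rw [h3, h4, h2] at h1
  linarith
end

section
/- Let Ω ⊂ ℝᵈ be a bounded Lipschitz domain. For μ ∈ H^{1/2}(∂Ω) let ω(μ) ∈ H¹(Ω) be the harmonic extension of μ (Δω(μ) = 0, ω(μ)|_{∂Ω} = μ) and let ψ(μ) ∈ H¹₀(Ω) solve −Δψ(μ) = ω(μ). Define 𝓛(μ) := −∂_n ψ(μ) ∈ H^{−1/2}(∂Ω). Then for all μ, η ∈ H^{1/2}(∂Ω): ⟨𝓛(μ), η⟩ = ∫_Ω ω(μ) ω(η), and consequently 𝓛 is symmetric and positive definite. -/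
/-- the continuous Steklov-type operator of Glowinski et al.
`H1 = H¹(Ω)`, `Htr = H^{1/2}(∂Ω)`, `Hneg = H^{−1/2}(∂Ω)`, `γ` the trace,
`a(u,v) = ∫ ∇u·∇v`, `L2(u,v) = ∫_Ω u v` (symmetric, positive definite).
`ω(μ)` is the harmonic extension of `μ` (`a(ω(μ), v) = 0` for `v ∈ H¹₀`,
`γ(ω(μ)) = μ`), `ψ(μ) ∈ H¹₀` solves `−Δψ(μ) = ω(μ)` weakly, and
`𝓛(μ) = −∂ₙψ(μ)` is characterized by
`⟨𝓛(μ), γ v⟩ = −(a(ψ(μ), v) − L2(ω(μ), v))`. Then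
`⟨𝓛(μ), η⟩ = ∫_Ω ω(μ) ω(η)`, and consequently `𝓛` is symmetric and positive
definite. -/
theorem stmt_9 {H1 Htr Hneg : Type*}
    [AddCommGroup H1] [Module ℝ H1] [AddCommGroup Htr] [Module ℝ Htr]
    [AddCommGroup Hneg] [Module ℝ Hneg]
    (γ : H1 →ₗ[ℝ] Htr)
    (a : H1 →ₗ[ℝ] H1 →ₗ[ℝ] ℝ) (hasym : ∀ x y, a x y = a y x)
    (L2 : H1 →ₗ[ℝ] H1 →ₗ[ℝ] ℝ) (hL2sym : ∀ x y, L2 x y = L2 y x)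
    (hL2psd : ∀ x, 0 ≤ L2 x x) (hL2def : ∀ x, L2 x x = 0 → x = 0)
    (pair : Hneg →ₗ[ℝ] Htr →ₗ[ℝ] ℝ)
    (ω ψ : Htr → H1) (𝓛 : Htr → Hneg)
    (hωtr : ∀ μ, γ (ω μ) = μ)
    (hωharm : ∀ μ, ∀ v, γ v = 0 → a (ω μ) v = 0)
    (hψ₀ : ∀ μ, γ (ψ μ) = 0)
    (hψ : ∀ μ, ∀ v, γ v = 0 → a (ψ μ) v = L2 (ω μ) v)
    (h𝓛 : ∀ μ (v : H1), pair (𝓛 μ) (γ v) = -(a (ψ μ) v - L2 (ω μ) v)) :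
    (∀ μ η, pair (𝓛 μ) η = L2 (ω μ) (ω η)) ∧
      (∀ μ η, pair (𝓛 μ) η = pair (𝓛 η) μ) ∧
      (∀ μ, μ ≠ 0 → 0 < pair (𝓛 μ) μ) := by
  have key : ∀ μ η, pair (𝓛 μ) η = L2 (ω μ) (ω η) := by
    intro μ η
    have h1 : pair (𝓛 μ) (γ (ω η)) = -(a (ψ μ) (ω η) - L2 (ω μ) (ω η)) := h𝓛 μ (ω η)
    have h2 : a (ψ μ) (ω η) = 0 := by
      rw [hasym]; exact hωharm η (ψ μ) (hψ₀ μ)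
    rw [hωtr] at h1
    rw [h1, h2]; ring
  refine ⟨key, ?_, ?_⟩
  · intro μ η; rw [key, key, hL2sym]
  · intro μ hμ
    rw [key]
    rcases lt_or_eq_of_le (hL2psd (ω μ)) with h | h
    · exact h
    · exfalso
      apply hμ
      have := hL2def (ω μ) h.symm
      rw [← hωtr μ, this, map_zero]
end
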